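/- Let ε > 0, c > 0 and 0 < α < 2π, and let Ω = {(r cos θ, r sin θ, z) : 0 < z < ε, 0 < r < cz, 0 < θ < α} ⊂ ℝ³ be the corresponding wedge-shaped conical domain with vertex at the origin. There exists a constant C > 0, depending only on α, such that for every function u : ℝ³ → ℝ that is continuously differentiable on an open neighborhood of the closure of Ω and vanishes on the face {(r, 0, z) : 0 ≤ z ≤ ε, 0 ≤ r ≤ cz}, one has ∫_Ω u(x₁,x₂,x₃)²/(x₁² + x₂²) dx ≤ C ∫_Ω ‖∇u(x)‖² dx (an inequality in the extended nonnegative reals). -/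

import Mathlib

open MeasureTheory Set Real

/-- The wedge-shaped conical domain with vertex at the origin, described in cylindrical
coordinates by `0 < z < ε`, `0 < r < c z`, `0 < θ < α`. -/
def wedgeCone (ε c α : ℝ) : Set (EuclideanSpace ℝ (Fin 3)) :=
  {x | ∃ r θ z : ℝ, 0 < z ∧ z < ε ∧ 0 < r ∧ r < c * z ∧ 0 < θ ∧ θ < α ∧
    x = ![r * Real.cos θ, r * Real.sin θ, z]}

open scoped ENNReal NNReal

noncomputable section

abbrev E3 := EuclideanSpace ℝ (Fin 3)

def wcPhi (p : E3) : E3 := WithLp.toLp 2 ![p 0 * Real.cos (p 1), p 0 * Real.sin (p 1), p 2]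

def wcA (p : E3) : Matrix (Fin 3) (Fin 3) ℝ :=
  ![![Real.cos (p 1), -(p 0) * Real.sin (p 1), 0],
    ![Real.sin (p 1), p 0 * Real.cos (p 1), 0],
    ![0, 0, 1]]

def wcD (p : E3) : E3 →L[ℝ] E3 :=
  LinearMap.toContinuousLinearMap (Matrix.toEuclideanLin (wcA p))

lemma wcD_det (p : E3) : (wcD p).det = p 0 := by
  have h1 : (wcD p).det = LinearMap.det (Matrix.toEuclideanLin (wcA p)) := rfl
  rw [h1]
  have h2 : Matrix.toEuclideanLin (wcA p) =
      ((WithLp.linearEquiv 2 ℝ (Fin 3 → ℝ)).symm : (Fin 3 → ℝ) ≃ₗ[ℝ] E3).conj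
        (Matrix.toLin' (wcA p)) := rfl
  rw [h2, LinearEquiv.conj_apply, LinearMap.comp_assoc, LinearMap.det_conj, LinearMap.det_toLin']
  rw [Matrix.det_fin_three]
  simp [wcA]
  have h := Real.sin_sq_add_cos_sq (p 1)
  linear_combination (p 0) * h

def eL : E3 ≃L[ℝ] (Fin 3 → ℝ) := PiLp.continuousLinearEquiv 2 ℝ _

def wcA' (q : Fin 3 → ℝ) : Matrix (Fin 3) (Fin 3) ℝ :=
  ![![Real.cos (q 1), -(q 0) * Real.sin (q 1), 0],
    ![Real.sin (q 1), q 0 * Real.cos (q 1), 0],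
    ![0, 0, 1]]

def wcD0 (q : Fin 3 → ℝ) : (Fin 3 → ℝ) →L[ℝ] (Fin 3 → ℝ) :=
  LinearMap.toContinuousLinearMap (Matrix.toLin' (wcA' q))

lemma phi0_hasFDerivAt (q : Fin 3 → ℝ) :
    HasFDerivAt (fun q : Fin 3 → ℝ => ![q 0 * Real.cos (q 1), q 0 * Real.sin (q 1), q 2])
      (wcD0 q) q := by
  apply hasFDerivAt_pi''
  intro i
  fin_cases i
  · show HasFDerivAt (fun q : Fin 3 → ℝ => q 0 * Real.cos (q 1)) _ q
    have h := ((ContinuousLinearMap.proj (R := ℝ) (φ := fun _ : Fin 3 => ℝ) 0).hasFDerivAt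
      (x := q)).mul (((ContinuousLinearMap.proj (R := ℝ) (φ := fun _ : Fin 3 => ℝ) 1).hasFDerivAt
      (x := q)).cos)
    refine h.congr_fderiv ?_
    ext v
    rw [ContinuousLinearMap.comp_apply, wcD0, LinearMap.coe_toContinuousLinearMap',
      Matrix.toLin'_apply]
    simp [wcD0, wcA', Matrix.mulVec, dotProduct, Fin.sum_univ_three]
    ring
  · show HasFDerivAt (fun q : Fin 3 → ℝ => q 0 * Real.sin (q 1)) _ q
    have h := ((ContinuousLinearMap.proj (R := ℝ) (φ := fun _ : Fin 3 => ℝ) 0).hasFDerivAt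
      (x := q)).mul (((ContinuousLinearMap.proj (R := ℝ) (φ := fun _ : Fin 3 => ℝ) 1).hasFDerivAt
      (x := q)).sin)
    refine h.congr_fderiv ?_
    ext v
    rw [ContinuousLinearMap.comp_apply, wcD0, LinearMap.coe_toContinuousLinearMap',
      Matrix.toLin'_apply]
    simp [wcD0, wcA', Matrix.mulVec, dotProduct, Fin.sum_univ_three]
    ring
  · show HasFDerivAt (fun q : Fin 3 → ℝ => q 2) _ q
    have h := (ContinuousLinearMap.proj (R := ℝ) (φ := fun _ : Fin 3 => ℝ) 2).hasFDerivAt (x := q)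
    refine h.congr_fderiv ?_
    ext v
    rw [ContinuousLinearMap.comp_apply, wcD0, LinearMap.coe_toContinuousLinearMap',
      Matrix.toLin'_apply]
    simp [wcD0, wcA', Matrix.mulVec, dotProduct, Fin.sum_univ_three]

lemma wcPhi_hasFDerivAt (p : E3) : HasFDerivAt wcPhi (wcD p) p := by
  have h := ((eL.symm.hasFDerivAt (x := (![(eL p) 0 * Real.cos ((eL p) 1),
      (eL p) 0 * Real.sin ((eL p) 1), (eL p) 2]))).comp p
      ((phi0_hasFDerivAt (eL p)).comp p (eL.hasFDerivAt (x := p))))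
  exact h

def wedgeCone' (ε c α : ℝ) : Set E3 :=
  {x | ∃ r θ z : ℝ, 0 < z ∧ z < ε ∧ 0 < r ∧ r < c * z ∧ 0 < θ ∧ θ < α ∧
    x = ![r * Real.cos θ, r * Real.sin θ, z]}

def wcS (ε c α : ℝ) : Set E3 :=
  {p | (0 < p 0 ∧ p 0 < c * p 2) ∧ (0 < p 1 ∧ p 1 < α) ∧ (0 < p 2 ∧ p 2 < ε)}

lemma contApply (i : Fin 3) : Continuous (fun p : E3 => p i) :=
  (continuous_apply i).comp eL.continuous

lemma wcS_isOpen (ε c α : ℝ) : IsOpen (wcS ε c α) := by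
  apply IsOpen.inter
  · exact IsOpen.inter (isOpen_lt continuous_const (contApply 0))
      (isOpen_lt (contApply 0) (continuous_const.mul (contApply 2)))
  apply IsOpen.inter
  · exact IsOpen.inter (isOpen_lt continuous_const (contApply 1))
      (isOpen_lt (contApply 1) continuous_const)
  · exact IsOpen.inter (isOpen_lt continuous_const (contApply 2))
      (isOpen_lt (contApply 2) continuous_const)

lemma wcPhi_cons (r θ z : ℝ) :
    wcPhi (WithLp.toLp 2 ![r, θ, z]) = WithLp.toLp 2 ![r * Real.cos θ, r * Real.sin θ, z] := by
  simp [wcPhi]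

lemma wedgeCone'_eq_image (ε c α : ℝ) : wedgeCone' ε c α = wcPhi '' wcS ε c α := by
  ext x
  constructor
  · rintro ⟨r, θ, z, hz, hzε, hr, hrc, hθ, hθα, hx⟩
    obtain rfl : x = WithLp.toLp 2 ![r * Real.cos θ, r * Real.sin θ, z] :=
      (WithLp.toLp_ofLp 2 x).symm.trans (congrArg (WithLp.toLp 2) hx)
    exact ⟨WithLp.toLp 2 ![r, θ, z], ⟨⟨by simpa using hr, by simpa using hrc⟩,
      ⟨by simpa using hθ, by simpa using hθα⟩, ⟨by simpa using hz, by simpa using hzε⟩⟩,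
      (wcPhi_cons r θ z)⟩
  · rintro ⟨p, ⟨⟨h1, h2⟩, ⟨h3, h4⟩, ⟨h5, h6⟩⟩, rfl⟩
    exact ⟨p 0, p 1, p 2, h5, h6, h1, h2, h3, h4, rfl⟩

lemma wcPhi_injOn (ε c α : ℝ) (hα : α ≤ 2 * Real.pi) : Set.InjOn wcPhi (wcS ε c α) := by
  rintro p ⟨⟨hp1, _⟩, ⟨hp3, hp4⟩, _⟩ q ⟨⟨hq1, _⟩, ⟨hq3, hq4⟩, _⟩ h
  have h0 : p 0 * Real.cos (p 1) = q 0 * Real.cos (q 1) := by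
    have := congrArg (fun w : E3 => w 0) h; simpa [wcPhi] using this
  have h1 : p 0 * Real.sin (p 1) = q 0 * Real.sin (q 1) := by
    have := congrArg (fun w : E3 => w 1) h; simpa [wcPhi] using this
  have h2 : p 2 = q 2 := by
    have := congrArg (fun w : E3 => w 2) h; simpa [wcPhi] using this
  have hw : (p 0 : ℂ) * Complex.exp ((p 1 : ℂ) * Complex.I) =
      (q 0 : ℂ) * Complex.exp ((q 1 : ℂ) * Complex.I) := by
    rw [Complex.exp_mul_I, Complex.exp_mul_I, ← Complex.ofReal_cos, ← Complex.ofReal_sin,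
      ← Complex.ofReal_cos, ← Complex.ofReal_sin]
    apply Complex.ext <;> simp [Complex.cos_ofReal_re, Complex.sin_ofReal_re, h0, h1]
  have habs : p 0 = q 0 := by
    have := congrArg norm hw
    simpa [Complex.norm_exp, abs_of_pos hp1, abs_of_pos hq1] using this
  have hexp : Complex.exp ((p 1 : ℂ) * Complex.I) = Complex.exp ((q 1 : ℂ) * Complex.I) := by
    apply mul_left_cancel₀ (Complex.ofReal_ne_zero.mpr hp1.ne') (by rw [habs] at hw ⊢; exact hw)
  obtain ⟨n, hn⟩ := Complex.exp_eq_exp_iff_exists_int.mp hexp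
  have hI : ((p 1 : ℂ) - ((q 1 : ℂ) + n * (2 * Real.pi))) * Complex.I = 0 := by
    have hπ : ((Real.pi : ℂ)) = (Real.pi : ℂ) := rfl
    push_cast at hn ⊢
    linear_combination hn
  have hreal : p 1 = q 1 + n * (2 * Real.pi) := by
    rcases mul_eq_zero.mp hI with h | h
    · have : (p 1 : ℂ) = (q 1 : ℂ) + (n : ℂ) * (2 * Real.pi) := by linear_combination h
      exact_mod_cast this
    · exact absurd h Complex.I_ne_zero
  have hn0 : n = 0 := by
    have hb : |p 1 - q 1| < 2 * Real.pi := by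
      rw [abs_sub_lt_iff]
      constructor <;> nlinarith [Real.pi_pos]
    rw [hreal] at hb
    have : |(n : ℝ)| < 1 := by
      have h2π : (0:ℝ) < 2 * Real.pi := by positivity
      rw [show q 1 + n * (2 * Real.pi) - q 1 = n * (2 * Real.pi) by ring, abs_mul,
        abs_of_pos h2π] at hb
      by_contra hcon
      push_neg at hcon
      nlinarith [abs_nonneg ((n:ℝ))]
    have h' : |n| < 1 := by exact_mod_cast this
    rcases abs_lt.mp h' with ⟨ha, hb'⟩
    omega
  have hθeq : p 1 = q 1 := by rw [hreal, hn0]; push_cast; ring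
  ext i
  fin_cases i <;> assumption


def mk3 (a b c : ℝ) : E3 := WithLp.toLp 2 ![a, b, c]

@[simp] lemma mk3_zero (a b c : ℝ) : mk3 a b c 0 = a := rfl
@[simp] lemma mk3_one (a b c : ℝ) : mk3 a b c 1 = b := rfl
@[simp] lemma mk3_two (a b c : ℝ) : mk3 a b c 2 = c := rfl

def wcGamma (r z t : ℝ) : E3 := mk3 (r * Real.cos t) (r * Real.sin t) z

lemma wcGamma_hasDerivAt (r z t : ℝ) :
    HasDerivAt (wcGamma r z) (mk3 (-(r * Real.sin t)) (r * Real.cos t) 0) t := by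
  have h : HasDerivAt (fun t => (![r * Real.cos t, r * Real.sin t, z] : Fin 3 → ℝ))
      (![-(r * Real.sin t), r * Real.cos t, 0]) t := by
    apply hasDerivAt_pi.mpr
    intro i
    fin_cases i
    · simpa using (Real.hasDerivAt_cos t).const_mul r
    · simpa using (Real.hasDerivAt_sin t).const_mul r
    · simpa using hasDerivAt_const t z
  exact (eL.symm.hasFDerivAt.comp_hasDerivAt t h)

lemma wcGamma_contDiff (r z : ℝ) : ContDiff ℝ 1 (wcGamma r z) := by
  have h0 : ContDiff ℝ 1 (fun t => (![r * Real.cos t, r * Real.sin t, z] : Fin 3 → ℝ)) := by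
    apply contDiff_pi.mpr
    intro i
    fin_cases i
    · simpa using (contDiff_const.mul Real.contDiff_cos).of_le le_top
    · simpa using (contDiff_const.mul Real.contDiff_sin).of_le le_top
    · simpa using contDiff_const
  exact ((eL.symm : (Fin 3 → ℝ) →L[ℝ] E3).contDiff).comp h0

lemma norm_wcGammaDeriv (r t : ℝ) (hr : 0 ≤ r) :
    ‖mk3 (-(r * Real.sin t)) (r * Real.cos t) 0‖ = r := by
  rw [EuclideanSpace.norm_eq]
  rw [Fin.sum_univ_three]
  simp only [mk3_zero, mk3_one, mk3_two]
  rw [show ‖-(r * Real.sin t)‖ ^ 2 + ‖r * Real.cos t‖ ^ 2 + ‖(0:ℝ)‖ ^ 2 = r ^ 2 by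
    rw [norm_neg]
    simp only [Real.norm_eq_abs, sq_abs, norm_zero]
    linear_combination r ^ 2 * Real.sin_sq_add_cos_sq t]
  exact Real.sqrt_sq hr

lemma gradient_norm_eq (u : E3 → ℝ) (x : E3) : ‖gradient u x‖ = ‖fderiv ℝ u x‖ := by
  unfold gradient
  exact LinearIsometryEquiv.norm_map _ _

lemma wc_deriv_bound (u : E3 → ℝ) (U : Set E3) (hU : IsOpen U) (hu : ContDiffOn ℝ 1 u U)
    (r z : ℝ) (hr : 0 ≤ r) (t : ℝ) (ht : wcGamma r z t ∈ U) :
    |deriv (fun s => u (wcGamma r z s)) t| ≤ r * ‖gradient u (wcGamma r z t)‖ := by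
  have hdu : DifferentiableAt ℝ u (wcGamma r z t) :=
    (hu.differentiableOn one_ne_zero).differentiableAt (hU.mem_nhds ht)
  have hder : HasDerivAt (fun s => u (wcGamma r z s))
      ((fderiv ℝ u (wcGamma r z t)) (mk3 (-(r * Real.sin t)) (r * Real.cos t) 0)) t :=
    (hdu.hasFDerivAt).comp_hasDerivAt t (wcGamma_hasDerivAt r z t)
  rw [hder.deriv, ← Real.norm_eq_abs]
  calc ‖(fderiv ℝ u (wcGamma r z t)) (mk3 (-(r * Real.sin t)) (r * Real.cos t) 0)‖
      ≤ ‖fderiv ℝ u (wcGamma r z t)‖ * ‖mk3 (-(r * Real.sin t)) (r * Real.cos t) 0‖ :=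
        (fderiv ℝ u (wcGamma r z t)).le_opNorm _
    _ = r * ‖gradient u (wcGamma r z t)‖ := by
        rw [norm_wcGammaDeriv r t hr, gradient_norm_eq, mul_comm]

@[simp] lemma wcPhi_apply0 (p : E3) : wcPhi p 0 = p 0 * Real.cos (p 1) := rfl
@[simp] lemma wcPhi_apply1 (p : E3) : wcPhi p 1 = p 0 * Real.sin (p 1) := rfl
@[simp] lemma wcPhi_apply2 (p : E3) : wcPhi p 2 = p 2 := rfl

lemma wcPhi_continuous : Continuous wcPhi :=
  continuous_iff_continuousAt.mpr fun p => (wcPhi_hasFDerivAt p).continuousAt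

lemma gradient_measurable (u : E3 → ℝ) : Measurable (gradient u) := by
  have h : Measurable (fun x => (InnerProductSpace.toDual ℝ E3).symm (fderiv ℝ u x)) :=
    ((InnerProductSpace.toDual ℝ E3).symm.continuous.measurable).comp (measurable_fderiv ℝ u)
  exact h

lemma wedgeCone_eq (ε c α : ℝ) : wedgeCone ε c α = wcPhi '' wcS ε c α :=
  wedgeCone'_eq_image ε c α

lemma hardy1d (a : ℝ) (ha : 0 < a) (v : ℝ → ℝ) (V : Set ℝ) (hV : IsOpen V)
    (hIV : Icc 0 a ⊆ V) (hv : ContDiffOn ℝ 1 v V) (h0 : v 0 = 0) :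
    ∫⁻ t in Ioo 0 a, ENNReal.ofReal (v t ^ 2) ≤
      ENNReal.ofReal (a ^ 2) * ∫⁻ t in Ioo 0 a, ENNReal.ofReal (deriv v t ^ 2) := by
  set A := ∫⁻ t in Ioo 0 a, ENNReal.ofReal (deriv v t ^ 2) with hA
  have hdiff : ∀ t ∈ V, DifferentiableAt ℝ v t := fun t ht =>
    (hv.differentiableOn one_ne_zero).differentiableAt (hV.mem_nhds ht)
  have hcontd : ContinuousOn (deriv v) V := hv.continuousOn_deriv_of_isOpen hV le_rfl
  have hsq : ∀ x : ℝ≥0∞, (x ^ (1/2 : ℝ)) ^ (2:ℕ) = x := by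
    intro x
    rw [← ENNReal.rpow_natCast _ 2, ← ENNReal.rpow_mul]
    norm_num
  -- pointwise bound
  have key : ∀ t ∈ Ioo 0 a, ENNReal.ofReal (v t ^ 2) ≤ A * ENNReal.ofReal a := by
    intro t ht
    have ht0 : (0:ℝ) ≤ t := ht.1.le
    have hIcc : Icc (0:ℝ) t ⊆ V := fun s hs => hIV ⟨hs.1, hs.2.trans ht.2.le⟩
    have hint : IntervalIntegrable (deriv v) volume 0 t := by
      apply ContinuousOn.intervalIntegrable
      rw [uIcc_of_le ht0]
      exact hcontd.mono hIcc
    have hftc : ∫ s in (0:ℝ)..t, deriv v s = v t - v 0 := by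
      apply intervalIntegral.integral_deriv_eq_sub
      · intro s hs
        rw [uIcc_of_le ht0] at hs
        exact hdiff s (hIcc hs)
      · exact hint
    have habs : |v t| ≤ ∫ s in (0:ℝ)..t, |deriv v s| := by
      rw [h0, sub_zero] at hftc
      rw [← hftc]
      exact intervalIntegral.abs_integral_le_integral_abs ht0
    have hintabs : IntegrableOn (fun s => |deriv v s|) (Ioc 0 t) volume := by
      rw [← intervalIntegrable_iff_integrableOn_Ioc_of_le ht0]
      exact hint.abs
    have h1 : ENNReal.ofReal (|v t|) ≤ ∫⁻ s in Ioc 0 t, ENNReal.ofReal (|deriv v s|) := by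
      calc ENNReal.ofReal (|v t|) ≤ ENNReal.ofReal (∫ s in (0:ℝ)..t, |deriv v s|) :=
            ENNReal.ofReal_le_ofReal habs
        _ = ENNReal.ofReal (∫ s in Ioc 0 t, |deriv v s|) := by
            rw [intervalIntegral.integral_of_le ht0]
        _ = ∫⁻ s in Ioc 0 t, ENNReal.ofReal (|deriv v s|) := by
            exact ofReal_integral_eq_lintegral_ofReal hintabs
              (Filter.Eventually.of_forall fun s => abs_nonneg _)
    have hmeas : AEMeasurable (fun s => ENNReal.ofReal (|deriv v s|))
        (volume.restrict (Ioc 0 t)) :=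
      (ENNReal.measurable_ofReal.comp (measurable_deriv v).abs).aemeasurable
    have hcs := ENNReal.lintegral_mul_le_Lp_mul_Lq (volume.restrict (Ioc 0 t))
      (Real.holderConjugate_iff_eq_conjExponent (by norm_num)|>.mpr (by norm_num) :
        Real.HolderConjugate 2 2) hmeas aemeasurable_const (g := fun _ => 1)
    simp only [Pi.mul_apply, mul_one, ENNReal.one_rpow] at hcs
    have hIoc2 : (∫⁻ s in Ioc 0 t, ENNReal.ofReal (|deriv v s|) ^ (2:ℝ)) =
        ∫⁻ s in Ioc 0 t, ENNReal.ofReal (deriv v s ^ 2) := by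
      apply lintegral_congr
      intro s
      rw [ENNReal.ofReal_rpow_of_nonneg (abs_nonneg _) (by norm_num)]
      congr 1
      rw [show ((2:ℝ) = ((2:ℕ):ℝ)) by norm_num, Real.rpow_natCast, sq_abs]
    have hone : (∫⁻ _ in Ioc 0 t, (1:ℝ≥0∞)) = ENNReal.ofReal t := by
      rw [setLIntegral_const, one_mul, Real.volume_Ioc, sub_zero]
    rw [hIoc2, hone] at hcs
    have hAbound : (∫⁻ s in Ioc 0 t, ENNReal.ofReal (deriv v s ^ 2)) ≤ A := by
      rw [hA]
      exact lintegral_mono_set (fun s hs => ⟨hs.1, lt_of_le_of_lt hs.2 ht.2⟩)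
    calc ENNReal.ofReal (v t ^ 2) = ENNReal.ofReal (|v t|) ^ (2:ℕ) := by
          rw [← ENNReal.ofReal_pow (abs_nonneg _), sq_abs]
      _ ≤ (∫⁻ s in Ioc 0 t, ENNReal.ofReal (|deriv v s|)) ^ (2:ℕ) :=
          pow_le_pow_left₀ zero_le h1 2
      _ ≤ ((∫⁻ s in Ioc 0 t, ENNReal.ofReal (deriv v s ^ 2)) ^ (1/2:ℝ)
            * ENNReal.ofReal t ^ (1/2:ℝ)) ^ (2:ℕ) := pow_le_pow_left₀ zero_le hcs 2
      _ = (∫⁻ s in Ioc 0 t, ENNReal.ofReal (deriv v s ^ 2)) * ENNReal.ofReal t := by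
          rw [mul_pow, hsq, hsq]
      _ ≤ A * ENNReal.ofReal a :=
          mul_le_mul' hAbound (ENNReal.ofReal_le_ofReal ht.2.le)
  calc ∫⁻ t in Ioo 0 a, ENNReal.ofReal (v t ^ 2)
      ≤ ∫⁻ _ in Ioo 0 a, A * ENNReal.ofReal a := setLIntegral_mono measurable_const key
    _ = A * ENNReal.ofReal a * ENNReal.ofReal a := by
        rw [setLIntegral_const, Real.volume_Ioo, sub_zero]
    _ = ENNReal.ofReal (a ^ 2) * A := by
        rw [mul_assoc, ← ENNReal.ofReal_mul ha.le, ← sq, mul_comm]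

/-- Hardy–Poincaré inequality on a wedge-shaped conical domain for functions vanishing on the
face `{(r, 0, z) : 0 ≤ z ≤ ε, 0 ≤ r ≤ c z}`, with constant depending only on the angle `α`. -/
theorem hardy_poincare_wedge_cone (α : ℝ) (hα : 0 < α) (hα' : α < 2 * Real.pi) :
    ∃ C : ℝ, 0 < C ∧ ∀ ε : ℝ, 0 < ε → ∀ c : ℝ, 0 < c →
      ∀ u : EuclideanSpace ℝ (Fin 3) → ℝ,
      (∃ U : Set (EuclideanSpace ℝ (Fin 3)), IsOpen U ∧ closure (wedgeCone ε c α) ⊆ U ∧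
        ContDiffOn ℝ 1 u U) →
      (∀ z ∈ Icc (0 : ℝ) ε, ∀ r ∈ Icc (0 : ℝ) (c * z), u (WithLp.toLp 2 ![r, 0, z]) = 0) →
      (∫⁻ x in wedgeCone ε c α, ENNReal.ofReal (u x ^ 2 / (x 0 ^ 2 + x 1 ^ 2))) ≤
        ENNReal.ofReal C *
          ∫⁻ x in wedgeCone ε c α, ENNReal.ofReal (‖gradient u x‖ ^ 2) := by
  classical
  refine ⟨α ^ 2, by positivity, ?_⟩
  intro ε hε c hc u hexU hbdry
  obtain ⟨U, hU, hclosU, hu⟩ := hexU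
  have hSmeas : MeasurableSet (wcS ε c α) := (wcS_isOpen ε c α).measurableSet
  have himg : wedgeCone ε c α = wcPhi '' wcS ε c α := wedgeCone_eq ε c α
  have hmapsU : MapsTo wcPhi (wcS ε c α) U := by
    intro p hp
    apply hclosU
    apply subset_closure
    rw [himg]
    exact mem_image_of_mem _ hp
  have hCOV1 := lintegral_image_eq_lintegral_abs_det_fderiv_mul volume hSmeas
    (fun p _ => (wcPhi_hasFDerivAt p).hasFDerivWithinAt) (wcPhi_injOn ε c α hα'.le)
    (fun x : E3 => ENNReal.ofReal (u x ^ 2 / (x 0 ^ 2 + x 1 ^ 2)))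
  have hCOV2 := lintegral_image_eq_lintegral_abs_det_fderiv_mul volume hSmeas
    (fun p _ => (wcPhi_hasFDerivAt p).hasFDerivWithinAt) (wcPhi_injOn ε c α hα'.le)
    (fun x : E3 => ENNReal.ofReal (‖gradient u x‖ ^ 2))
  simp only [wcD_det] at hCOV1 hCOV2
  rw [himg, hCOV1, hCOV2]
  -- indicator forms
  set g1 : E3 → ℝ≥0∞ := fun p => ENNReal.ofReal |p 0| *
      ENNReal.ofReal (u (wcPhi p) ^ 2 / (wcPhi p 0 ^ 2 + wcPhi p 1 ^ 2)) with hg1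
  set g2 : E3 → ℝ≥0∞ := fun p => ENNReal.ofReal (α ^ 2) *
      (ENNReal.ofReal |p 0| * ENNReal.ofReal (‖gradient u (wcPhi p)‖ ^ 2)) with hg2
  have hpi : ∀ (F : E3 → ℝ≥0∞), (∫⁻ p, F p) =
      ∫⁻ q, F (WithLp.toLp 2 q) ∂(Measure.pi fun _ : Fin 3 => (volume : Measure ℝ)) := by
    intro F
    rw [← MeasureTheory.volume_pi]
    exact (((EuclideanSpace.volume_preserving_symm_measurableEquiv_toLp (Fin 3)).symm
      (MeasurableEquiv.toLp 2 (Fin 3 → ℝ)).symm).lintegral_comp_emb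
      (MeasurableEquiv.measurableEmbedding _) F).symm
  have hstep : ∀ (g : E3 → ℝ≥0∞), (∫⁻ p in wcS ε c α, g p) =
      ∫⁻ q, (wcS ε c α).indicator g (WithLp.toLp 2 q) ∂(Measure.pi fun _ : Fin 3 => (volume : Measure ℝ)) := by
    intro g
    rw [← lintegral_indicator hSmeas g]
    exact hpi _
  rw [hstep, hstep, ← lintegral_const_mul' _ _ (ENNReal.ofReal_ne_top (r := α ^ 2))]
  have main : ∀ (F G : (Fin 3 → ℝ) → ℝ≥0∞), Measurable F → Measurable G →
      (∀ x : Fin 3 → ℝ, (∫⁻ t, F (Function.update x 1 t)) ≤ ∫⁻ t, G (Function.update x 1 t)) →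
      (∫⁻ q, F q ∂(Measure.pi fun _ : Fin 3 => (volume : Measure ℝ))) ≤
        ∫⁻ q, G q ∂(Measure.pi fun _ : Fin 3 => (volume : Measure ℝ)) := by
    intro F G hF hG hcore
    rw [lintegral_eq_lmarginal_univ (fun _ => (0:ℝ)), lintegral_eq_lmarginal_univ (fun _ => (0:ℝ))]
    have huniv : (Finset.univ : Finset (Fin 3)) = ({0, 2} : Finset (Fin 3)) ∪ {1} := by decide
    rw [huniv, lmarginal_union _ F hF (Finset.disjoint_left.mpr (by decide)),
      lmarginal_union _ G hG (Finset.disjoint_left.mpr (by decide))]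
    have h1 : (∫⋯∫⁻_{1}, F ∂(fun _ : Fin 3 => (volume : Measure ℝ))) ≤
        ∫⋯∫⁻_{1}, G ∂(fun _ : Fin 3 => (volume : Measure ℝ)) := by
      intro x
      simp only [lmarginal_singleton]
      exact hcore x
    exact lmarginal_mono h1 _
  have hSpiOpen : IsOpen (eL.symm ⁻¹' wcS ε c α) :=
    (wcS_isOpen ε c α).preimage eL.symm.continuous
  apply main
  · -- Measurable F
    set gIn : E3 → ℝ≥0∞ := fun p =>
      ENNReal.ofReal (u (wcPhi p) ^ 2 / (wcPhi p 0 ^ 2 + wcPhi p 1 ^ 2)) with hgIn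
    have hg1cont : ContinuousOn gIn (wcS ε c α) := by
      rw [hgIn]
      have huPhi : ContinuousOn (fun p : E3 => u (wcPhi p)) (wcS ε c α) :=
        (hu.continuousOn).comp wcPhi_continuous.continuousOn hmapsU
      have hnum : ContinuousOn (fun p : E3 => u (wcPhi p) ^ 2) (wcS ε c α) := huPhi.pow 2
      have hden : ContinuousOn (fun p : E3 => wcPhi p 0 ^ 2 + wcPhi p 1 ^ 2) (wcS ε c α) := by
        apply ContinuousOn.add
        · exact (((contApply 0).comp wcPhi_continuous).pow 2).continuousOn
        · exact (((contApply 1).comp wcPhi_continuous).pow 2).continuousOn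
      have hdenne : ∀ p ∈ wcS ε c α, wcPhi p 0 ^ 2 + wcPhi p 1 ^ 2 ≠ 0 := by
        rintro p ⟨⟨hp0, -⟩, -, -⟩
        simp only [wcPhi_apply0, wcPhi_apply1]
        have h := Real.sin_sq_add_cos_sq (p 1)
        have hid : (p 0 * Real.cos (p 1)) ^ 2 + (p 0 * Real.sin (p 1)) ^ 2 = p 0 ^ 2 := by
          linear_combination (p 0) ^ 2 * h
        rw [hid]
        exact pow_ne_zero 2 hp0.ne'
      exact ENNReal.continuous_ofReal.comp_continuousOn (hnum.div hden hdenne)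
    have hcontPi : ContinuousOn (fun q : Fin 3 → ℝ => gIn (eL.symm q))
        (eL.symm ⁻¹' wcS ε c α) :=
      hg1cont.comp eL.symm.continuous.continuousOn (fun q hq => hq)
    have hmp := ContinuousOn.measurable_piecewise (g := fun _ => (0:ℝ≥0∞)) hcontPi
      continuousOn_const hSpiOpen.measurableSet
    have heq2 : ((eL.symm ⁻¹' wcS ε c α).piecewise (fun q => gIn (eL.symm q))
        (fun _ => (0:ℝ≥0∞))) = (fun q : Fin 3 → ℝ => (wcS ε c α).indicator gIn (WithLp.toLp 2 q)) := by
      funext q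
      by_cases h : WithLp.toLp 2 q ∈ wcS ε c α
      · have h' : q ∈ eL.symm ⁻¹' wcS ε c α := h
        simp only [Set.piecewise, Set.indicator, h, h', if_pos]
        rfl
      · have h' : q ∉ eL.symm ⁻¹' wcS ε c α := h
        simp only [Set.piecewise, Set.indicator, h, h', if_neg, not_false_iff]
    rw [heq2] at hmp
    have heq3 : (fun q : Fin 3 → ℝ => (wcS ε c α).indicator (fun p =>
        ENNReal.ofReal |p 0| * ENNReal.ofReal (u (wcPhi p) ^ 2 / (wcPhi p 0 ^ 2 + wcPhi p 1 ^ 2)))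
        (WithLp.toLp 2 q))
        = fun q : Fin 3 → ℝ => ENNReal.ofReal |q 0| * (wcS ε c α).indicator gIn (WithLp.toLp 2 q) := by
      funext q
      by_cases h : WithLp.toLp 2 q ∈ wcS ε c α
      · rw [Set.indicator_of_mem h, Set.indicator_of_mem h]
      · rw [Set.indicator_of_notMem h, Set.indicator_of_notMem h, mul_zero]
    rw [heq3]
    exact (ENNReal.measurable_ofReal.comp ((measurable_pi_apply 0).abs)).mul hmp
  · -- Measurable G
    apply Measurable.const_mul
    refine Measurable.comp (g := (wcS ε c α).indicator _) ?_
      (WithLp.measurable_toLp (p := 2) (X := Fin 3 → ℝ))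
    apply Measurable.indicator
    · refine Measurable.mul (f := fun x : E3 => ENNReal.ofReal |x 0|)
        (g := fun x : E3 => ENNReal.ofReal (‖gradient u (wcPhi x)‖ ^ 2)) ?_ ?_
      · exact ENNReal.measurable_ofReal.comp ((contApply 0).measurable.abs)
      · apply ENNReal.measurable_ofReal.comp
        apply Measurable.pow_const
        exact ((gradient_measurable u).comp wcPhi_continuous.measurable).norm
    · exact hSmeas
  · -- core 1D inequality
    intro x
    have h0ne1 : (0 : Fin 3) ≠ 1 := by decide
    have h2ne1 : (2 : Fin 3) ≠ 1 := by decide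
    have hup0 : ∀ t : ℝ, (WithLp.toLp 2 (Function.update x 1 t) : E3) 0 = x 0 :=
      fun t => Function.update_of_ne h0ne1 t x
    have hup1 : ∀ t : ℝ, (WithLp.toLp 2 (Function.update x 1 t) : E3) 1 = t :=
      fun t => Function.update_self 1 t x
    have hup2 : ∀ t : ℝ, (WithLp.toLp 2 (Function.update x 1 t) : E3) 2 = x 2 :=
      fun t => Function.update_of_ne h2ne1 t x
    have hup0' : ∀ t : ℝ, Function.update x 1 t 0 = x 0 := fun t => Function.update_of_ne h0ne1 t x
    have hup1' : ∀ t : ℝ, Function.update x 1 t 1 = t := fun t => Function.update_self 1 t x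
    have hup2' : ∀ t : ℝ, Function.update x 1 t 2 = x 2 := fun t => Function.update_of_ne h2ne1 t x
    by_cases hcase : (0 < x 0 ∧ x 0 < c * x 2) ∧ (0 < x 2 ∧ x 2 < ε)
    · obtain ⟨⟨hr0, hrc⟩, hz0, hzε⟩ := hcase
      set r := x 0
      set z := x 2
      set v : ℝ → ℝ := fun t => u (wcGamma r z t) with hvdef
      have hmem : ∀ t : ℝ, (WithLp.toLp 2 (Function.update x 1 t) ∈ wcS ε c α) ↔ t ∈ Ioo 0 α := by
        intro t
        constructor
        · rintro ⟨-, ⟨b1, b2⟩, -⟩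
          rw [hup1 t] at b1 b2
          exact ⟨b1, b2⟩
        · intro ht
          refine ⟨⟨?_, ?_⟩, ⟨?_, ?_⟩, ?_, ?_⟩
          · rw [hup0 t]; exact hr0
          · rw [hup0 t, hup2 t]; exact hrc
          · rw [hup1 t]; exact ht.1
          · rw [hup1 t]; exact ht.2
          · rw [hup2 t]; exact hz0
          · rw [hup2 t]; exact hzε
      have hγU : ∀ t ∈ Icc (0:ℝ) α, wcGamma r z t ∈ U := by
        intro t ht
        apply hclosU
        have hsub : wcGamma r z '' Ioo 0 α ⊆ wedgeCone ε c α := by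
          rintro w ⟨t', ht', rfl⟩
          exact ⟨r, t', z, hz0, hzε, hr0, hrc, ht'.1, ht'.2, rfl⟩
        have h1 : wcGamma r z t ∈ wcGamma r z '' closure (Ioo 0 α) := by
          rw [closure_Ioo hα.ne]
          exact mem_image_of_mem _ ht
        have h2 := image_closure_subset_closure_image
          (s := Ioo 0 α) (wcGamma_contDiff r z).continuous h1
        exact closure_mono hsub h2
      have hPhiup : ∀ t : ℝ, wcPhi (WithLp.toLp 2 (Function.update x 1 t)) = wcGamma r z t := by
        intro t
        ext i
        fin_cases i <;>
          simp [wcPhi, wcGamma, mk3, hup0' t, hup1' t, hup2' t, r, z]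
      have hLHS : ∀ t : ℝ, (wcS ε c α).indicator
          (fun p => ENNReal.ofReal |p 0| *
            ENNReal.ofReal (u (wcPhi p) ^ 2 / (wcPhi p 0 ^ 2 + wcPhi p 1 ^ 2)))
          (WithLp.toLp 2 (Function.update x 1 t)) =
          (Ioo 0 α).indicator (fun t => ENNReal.ofReal (v t ^ 2 / r)) t := by
        intro t
        by_cases ht : t ∈ Ioo 0 α
        · rw [Set.indicator_of_mem ((hmem t).mpr ht), Set.indicator_of_mem ht]
          simp only [wcPhi_apply0, wcPhi_apply1, hup0' t, hup1' t, hPhiup t]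
          rw [show (wcGamma r z t) 0 = r * Real.cos t from rfl,
            show (wcGamma r z t) 1 = r * Real.sin t from rfl]
          have hden : r * Real.cos t * (r * Real.cos t) + r * Real.sin t * (r * Real.sin t)
              = r ^ 2 := by
            have h := Real.sin_sq_add_cos_sq t
            nlinarith
          rw [abs_of_pos hr0, ← ENNReal.ofReal_mul hr0.le]
          congr 1
          rw [pow_two (r * Real.cos t), pow_two (r * Real.sin t), hden]
          simp only [hvdef]
          field_simp
        · rw [Set.indicator_of_notMem (fun hmem' => ht ((hmem t).mp hmem')),
            Set.indicator_of_notMem ht]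
      have hRHS : ∀ t : ℝ, ENNReal.ofReal (α ^ 2) * (wcS ε c α).indicator
          (fun p => ENNReal.ofReal |p 0| * ENNReal.ofReal (‖gradient u (wcPhi p)‖ ^ 2))
          (WithLp.toLp 2 (Function.update x 1 t)) =
          (Ioo 0 α).indicator (fun t => ENNReal.ofReal (α ^ 2) *
            (ENNReal.ofReal r * ENNReal.ofReal (‖gradient u (wcGamma r z t)‖ ^ 2))) t := by
        intro t
        by_cases ht : t ∈ Ioo 0 α
        · rw [Set.indicator_of_mem ((hmem t).mpr ht), Set.indicator_of_mem ht]
          simp only [hup0' t, hPhiup t, abs_of_pos hr0]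
        · rw [Set.indicator_of_notMem (fun hmem' => ht ((hmem t).mp hmem')),
            Set.indicator_of_notMem ht, mul_zero]
      rw [lintegral_congr hLHS, lintegral_congr hRHS,
        lintegral_indicator measurableSet_Ioo, lintegral_indicator measurableSet_Ioo]
      -- apply the 1D Hardy inequality
      have hVopen : IsOpen (wcGamma r z ⁻¹' U) :=
        hU.preimage (wcGamma_contDiff r z).continuous
      have hIccV : Icc 0 α ⊆ wcGamma r z ⁻¹' U := fun t ht => hγU t ht
      have hvCD : ContDiffOn ℝ 1 v (wcGamma r z ⁻¹' U) :=
        hu.comp (wcGamma_contDiff r z).contDiffOn (fun t ht => ht)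
      have hv0 : v 0 = 0 := by
        have hγ0 : wcGamma r z 0 = (WithLp.toLp 2 ![r, 0, z] : E3) := by
          ext i
          fin_cases i <;> simp [wcGamma, mk3]
        rw [hvdef]
        simp only [hγ0]
        exact hbdry z ⟨hz0.le, hzε.le⟩ r ⟨hr0.le, hrc.le⟩
      have hhardy := hardy1d α hα v (wcGamma r z ⁻¹' U) hVopen hIccV hvCD hv0
      have hgradmeas : Measurable (fun t : ℝ =>
          ENNReal.ofReal ((r * ‖gradient u (wcGamma r z t)‖) ^ 2)) := by
        apply ENNReal.measurable_ofReal.comp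
        apply Measurable.pow_const
        exact (measurable_const.mul ((gradient_measurable u).comp
          (wcGamma_contDiff r z).continuous.measurable).norm)
      have hdb : ∀ t ∈ Ioo (0:ℝ) α, ENNReal.ofReal (deriv v t ^ 2) ≤
          ENNReal.ofReal ((r * ‖gradient u (wcGamma r z t)‖) ^ 2) := by
        intro t ht
        apply ENNReal.ofReal_le_ofReal
        have hb := wc_deriv_bound u U hU hu r z hr0.le t (hγU t ⟨ht.1.le, ht.2.le⟩)
        calc deriv v t ^ 2 = |deriv v t| ^ 2 := (sq_abs _).symm
          _ ≤ (r * ‖gradient u (wcGamma r z t)‖) ^ 2 :=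
              pow_le_pow_left₀ (abs_nonneg _) hb 2
      have hsqsplit : ∀ t : ℝ, ENNReal.ofReal ((r * ‖gradient u (wcGamma r z t)‖) ^ 2) =
          ENNReal.ofReal (r ^ 2) * ENNReal.ofReal (‖gradient u (wcGamma r z t)‖ ^ 2) := by
        intro t
        rw [mul_pow, ENNReal.ofReal_mul (sq_nonneg r)]
      calc ∫⁻ t in Ioo 0 α, ENNReal.ofReal (v t ^ 2 / r)
          = ∫⁻ t in Ioo 0 α, ENNReal.ofReal (1/r) * ENNReal.ofReal (v t ^ 2) := by
            apply lintegral_congr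
            intro t
            rw [← ENNReal.ofReal_mul (by positivity : (0:ℝ) ≤ 1/r)]
            congr 1
            field_simp
        _ = ENNReal.ofReal (1/r) * ∫⁻ t in Ioo 0 α, ENNReal.ofReal (v t ^ 2) :=
            lintegral_const_mul' _ _ ENNReal.ofReal_ne_top
        _ ≤ ENNReal.ofReal (1/r) * (ENNReal.ofReal (α ^ 2) *
              ∫⁻ t in Ioo 0 α, ENNReal.ofReal (deriv v t ^ 2)) :=
            mul_le_mul_right hhardy _
        _ ≤ ENNReal.ofReal (1/r) * (ENNReal.ofReal (α ^ 2) *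
              ∫⁻ t in Ioo 0 α, ENNReal.ofReal ((r * ‖gradient u (wcGamma r z t)‖) ^ 2)) :=
            mul_le_mul_right (mul_le_mul_right (setLIntegral_mono hgradmeas hdb) _) _
        _ = ∫⁻ t in Ioo 0 α, ENNReal.ofReal (α ^ 2) *
              (ENNReal.ofReal r * ENNReal.ofReal (‖gradient u (wcGamma r z t)‖ ^ 2)) := by
            have hconst : ENNReal.ofReal (1/r) * (ENNReal.ofReal (α^2) * ENNReal.ofReal (r^2))
                = ENNReal.ofReal (α^2) * ENNReal.ofReal r := by
              rw [← ENNReal.ofReal_mul (by positivity : (0:ℝ) ≤ α^2),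
                ← ENNReal.ofReal_mul (by positivity : (0:ℝ) ≤ 1/r),
                ← ENNReal.ofReal_mul (by positivity : (0:ℝ) ≤ α^2)]
              congr 1
              field_simp
            rw [lintegral_congr (fun t => hsqsplit t),
              lintegral_const_mul' (ENNReal.ofReal (r^2)) _ ENNReal.ofReal_ne_top,
              lintegral_congr (fun t : ℝ => (mul_assoc (ENNReal.ofReal (α^2))
                (ENNReal.ofReal r) (ENNReal.ofReal (‖gradient u (wcGamma r z t)‖ ^ 2))).symm),
              lintegral_const_mul' _ _
                (ENNReal.mul_ne_top ENNReal.ofReal_ne_top ENNReal.ofReal_ne_top)]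
            rw [show ∀ X : ℝ≥0∞, ENNReal.ofReal (1/r) * (ENNReal.ofReal (α^2) *
                (ENNReal.ofReal (r^2) * X)) =
                (ENNReal.ofReal (1/r) * (ENNReal.ofReal (α^2) * ENNReal.ofReal (r^2))) * X
              from fun X => by ring, hconst]
    · -- degenerate case: indicator vanishes identically
      have hF0 : ∀ t : ℝ, (wcS ε c α).indicator
          (fun p => ENNReal.ofReal |p 0| *
            ENNReal.ofReal (u (wcPhi p) ^ 2 / (wcPhi p 0 ^ 2 + wcPhi p 1 ^ 2)))
          (WithLp.toLp 2 (Function.update x 1 t)) = 0 := by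
        intro t
        apply Set.indicator_of_notMem
        rintro ⟨⟨a1, a2⟩, -, a5, a6⟩
        rw [hup0 t] at a1 a2
        rw [hup2 t] at a2 a5 a6
        exact hcase ⟨⟨a1, a2⟩, a5, a6⟩
      rw [lintegral_congr hF0, lintegral_zero]
      exact zero_le
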